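/- arXiv:1908.04665 — 4 statements merged into one kernel-verified Lean document; each statement's English description precedes it below -/
import Mathlib

section
/- Let (γ_n) be monotone increasing with γ_0 = 0, let F ∈ X_γ have zeros α_1, …, α_m in D ordered by increasing modulus (m finite or infinite), with Blaschke decomposition F = B·G. Define H_{α_k}(z) = (∏_{j=k+1}^m (z−α_j)/(1−ᾱ_j z))·G(z)/(1−ᾱ_k z). If the difference sequence Γ_n = γ_{n+1}−γ_n is monotone increasing, then for each k, ‖G(e^{i·})/(1−ᾱ_k e^{i·})‖_{Y_γ}^2 ≤ ‖H_{α_k}‖_{Y_γ}^2 ≤ ‖F(e^{i·})/(e^{i·}−α_k)‖_{Y_γ}^2. -/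
/-!
By Abel summation, `‖a‖²_{Y_γ} = Γ₀ T₀(a) + Σ_j (Γ_{j+1} - Γ_j) T_{j+1}(a)` with
`Γ_n = γ_{n+1} - γ_n` and tails `T_k(a) = Σ_{n ≥ k} |a_n|²`; as `Γ` is nonnegative and
nondecreasing, it suffices to compare all tails.

Multiplying by a Blaschke factor `b_β` can only enlarge tails. If `A` are the coefficients of
`φ/(1 - β̄z)`, then `φ` and `b_β φ` have coefficients `A_n - β̄A_{n-1}` and `A_{n-1} - βA_n`, and
`|A_{n-1} - βA_n|² - |A_n - β̄A_{n-1}|² = (1 - |β|²)(|A_{n-1}|² - |A_n|²)` telescopes, provided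
`A_n → 0`. This decay propagates down from the coefficients of `F/(z - α_k)`, which tend to `0`
because those of `F` do.

Now `F/(z - α_k) = (∏_{j<k} b_{α_j}) H_{α_k}` gives the right inequality, and
`H_{α_k} = (∏_{k<j≤N} b_{α_j}) F_N/(1 - ᾱ_k z)` gives the left one after letting `N → m`: the
coefficients of `F_N/(1 - ᾱ_k z)` are bounded in `ℓ²` by those of `H_{α_k}`, hence converge to
those of `G/(1 - ᾱ_k z)`, and tails are lower semicontinuous.
-/

open Finset Filter

/-- `Y_γ` semi-norm squared, valued in `ℝ≥0∞` (the weights `γ_{n+1}-γ_n` are nonnegative). -/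
noncomputable def ynorm2e (γ : ℕ → ℝ) (a : ℕ → ℂ) : ENNReal :=
  ∑' n, ENNReal.ofReal ((γ (n + 1) - γ n) * ‖a n‖ ^ 2)

def IsCoeffs (a : ℕ → ℂ) (F : ℂ → ℂ) : Prop :=
  ∀ z : ℂ, ‖z‖ < 1 → HasSum (fun n => a n * z ^ n) (F z)

open scoped ENNReal Topology ComplexConjugate

noncomputable def tailNormSq (k : ℕ) (a : ℕ → ℂ) : ℝ≥0∞ :=
  ∑' n, ENNReal.ofReal (‖a (n + k)‖ ^ 2)

lemma ENNReal.tsum_add_sum_range_mul (c : ℝ≥0∞) (d x : ℕ → ℝ≥0∞) :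
    ∑' n, (c + ∑ j ∈ range n, d j) * x n
      = c * ∑' n, x n + ∑' j, d j * ∑' n, x (n + (j + 1)) := by
  simp_rw [add_mul, Finset.sum_mul]
  rw [ENNReal.tsum_add, ENNReal.tsum_mul_left]
  congr 1
  have hsum : ∀ n, ∑ j ∈ range n, d j * x n = ∑' j, if j < n then d j * x n else 0 := fun n => by
    rw [tsum_eq_sum (s := range n) fun j hj => if_neg (by simpa using hj)]
    exact Finset.sum_congr rfl fun j hj => (if_pos (by simpa using hj)).symm
  simp_rw [hsum]
  rw [ENNReal.tsum_comm]
  congr 1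
  funext j
  rw [← Summable.sum_add_tsum_nat_add' (k := j + 1) ENNReal.summable,
    Finset.sum_eq_zero fun n hn => if_neg (by simp at hn; omega), zero_add,
    ← ENNReal.tsum_mul_left]
  exact tsum_congr fun n => if_pos (by omega)

lemma ynorm2e_eq_tailNormSq {γ : ℕ → ℝ} (hmono : Monotone γ)
    (hconv : ∀ n, γ (n + 1) - γ n ≤ γ (n + 2) - γ (n + 1)) (a : ℕ → ℂ) :
    ynorm2e γ a = ENNReal.ofReal (γ 1 - γ 0) * tailNormSq 0 a
      + ∑' j, ENNReal.ofReal ((γ (j + 2) - γ (j + 1)) - (γ (j + 1) - γ j))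
          * tailNormSq (j + 1) a := by
  have hΓ : ∀ n, 0 ≤ γ (n + 1) - γ n := fun n => sub_nonneg.2 (hmono n.le_succ)
  have hsplit : ∀ n, ENNReal.ofReal (γ (n + 1) - γ n) = ENNReal.ofReal (γ 1 - γ 0)
      + ∑ j ∈ range n, ENNReal.ofReal ((γ (j + 2) - γ (j + 1)) - (γ (j + 1) - γ j)) := by
    intro n
    induction n with
    | zero => simp
    | succ n ih =>
      rw [Finset.sum_range_succ, ← add_assoc, ← ih,
        ← ENNReal.ofReal_add (hΓ n) (sub_nonneg.2 (hconv n))]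
      ring_nf
  simp only [ynorm2e, tailNormSq, add_zero]
  rw [← ENNReal.tsum_add_sum_range_mul _ _ fun n => ENNReal.ofReal (‖a n‖ ^ 2)]
  exact tsum_congr fun n => by rw [ENNReal.ofReal_mul (hΓ n), hsplit]

lemma ynorm2e_le_of_tailNormSq_le {γ : ℕ → ℝ} (hmono : Monotone γ)
    (hconv : ∀ n, γ (n + 1) - γ n ≤ γ (n + 2) - γ (n + 1)) {a c : ℕ → ℂ}
    (h : ∀ k, tailNormSq k a ≤ tailNormSq k c) : ynorm2e γ a ≤ ynorm2e γ c := by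
  rw [ynorm2e_eq_tailNormSq hmono hconv, ynorm2e_eq_tailNormSq hmono hconv]
  gcongr with j
  · exact h 0
  · exact h (j + 1)

lemma Filter.Eventually.exists_ofReal_mem_Ioo {p : ℂ → Prop} (hp : ∀ᶠ z in cofinite, p z)
    {s t : ℝ} (hst : s < t) : ∃ x ∈ Set.Ioo s t, p x := by
  have hreal : ∀ᶠ x : ℝ in cofinite, p x := Complex.ofReal_injective.tendsto_cofinite.eventually hp
  obtain ⟨x, hx, hxs⟩ :=
    (hreal.and_frequently (frequently_cofinite_iff_infinite.2 (Set.Ioo_infinite hst))).exists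
  exact ⟨x, hxs, hx⟩

/-- Exceptional points are allowed because `F/(z - α)` is only given off `α`, and a Blaschke
product can only be cancelled off its zeros. -/
def IsCoeffsCofinite (a : ℕ → ℂ) (φ : ℂ → ℂ) : Prop :=
  ∀ᶠ z in cofinite, ‖z‖ < 1 → HasSum (fun n => a n * z ^ n) (φ z)

lemma IsCoeffs.isCoeffsCofinite {a : ℕ → ℂ} {φ : ℂ → ℂ} (h : IsCoeffs a φ) :
    IsCoeffsCofinite a φ :=
  Eventually.of_forall h

namespace IsCoeffsCofinite

variable {a b : ℕ → ℂ} {φ ψ : ℂ → ℂ}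

lemma congr (h : IsCoeffsCofinite a φ) (hφψ : ∀ᶠ z in cofinite, ‖z‖ < 1 → φ z = ψ z) :
    IsCoeffsCofinite a ψ := by
  filter_upwards [h, hφψ] with z hz hφψz hz1
  exact hφψz hz1 ▸ hz hz1

lemma sub (ha : IsCoeffsCofinite a φ) (hb : IsCoeffsCofinite b ψ) :
    IsCoeffsCofinite (a - b) (φ - ψ) := by
  filter_upwards [ha, hb] with z hza hzb hz
  simpa only [Pi.sub_apply, sub_mul] using (hza hz).sub (hzb hz)

lemma const_mul (h : IsCoeffsCofinite a φ) (c : ℂ) :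
    IsCoeffsCofinite (fun n => c * a n) (fun z => c * φ z) := by
  filter_upwards [h] with z hz hz1
  simpa only [mul_assoc] using (hz hz1).mul_left c

lemma exists_norm_le_div_pow (h : IsCoeffsCofinite a φ) {r : ℝ} (hr0 : 0 < r) (hr1 : r < 1) :
    ∃ C, ∀ n, ‖a n‖ ≤ C / r ^ n := by
  obtain ⟨ρ, ⟨hrρ, hρ1⟩, hρ⟩ := h.exists_ofReal_mem_Ioo hr1
  have hρ0 : 0 < ρ := hr0.trans hrρ
  have hnorm : ‖(ρ : ℂ)‖ = ρ := by rw [Complex.norm_real, Real.norm_of_nonneg hρ0.le]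
  obtain ⟨C, hC⟩ := (hρ (by rwa [hnorm])).summable.tendsto_atTop_zero.norm.bddAbove_range
  have hterm : ∀ n, ‖a n‖ * ρ ^ n ≤ C := fun n => by
    simpa only [norm_mul, norm_pow, hnorm] using hC ⟨n, rfl⟩
  have hC0 : 0 ≤ C := (by positivity : 0 ≤ ‖a 0‖ * ρ ^ 0).trans (hterm 0)
  refine ⟨C, fun n => ?_⟩
  calc ‖a n‖ ≤ C / ρ ^ n := (le_div_iff₀ (by positivity)).2 (hterm n)
    _ ≤ C / r ^ n := by gcongr

lemma exists_norm_le_mul_two_pow (h : IsCoeffsCofinite a φ) : ∃ C, ∀ n, ‖a n‖ ≤ C * 2 ^ n := by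
  obtain ⟨C, hC⟩ := h.exists_norm_le_div_pow (r := 1 / 2) (by norm_num) (by norm_num)
  exact ⟨C, fun n => by simpa [div_eq_mul_inv] using hC n⟩

lemma summable_norm_mul_pow (h : IsCoeffsCofinite a φ) {z : ℂ} (hz : ‖z‖ < 1) :
    Summable fun n => ‖a n * z ^ n‖ := by
  obtain ⟨r, hzr, hr1⟩ := exists_between hz
  have hr0 : 0 < r := (norm_nonneg z).trans_lt hzr
  obtain ⟨C, hC⟩ := h.exists_norm_le_div_pow hr0 hr1
  refine .of_nonneg_of_le (fun n => norm_nonneg _) (fun n => ?_)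
    ((summable_geometric_of_lt_one (by positivity) ((div_lt_one hr0).2 hzr)).mul_left C)
  calc ‖a n * z ^ n‖ = ‖a n‖ * ‖z‖ ^ n := by rw [norm_mul, norm_pow]
    _ ≤ C / r ^ n * ‖z‖ ^ n := by gcongr; exact hC n
    _ = C * (‖z‖ / r) ^ n := by rw [div_pow]; ring

end IsCoeffsCofinite

def shiftCoeff (a : ℕ → ℂ) : ℕ → ℂ
  | 0 => 0
  | n + 1 => a n

lemma HasSum.shift {a : ℕ → ℂ} {z s : ℂ} (h : HasSum (fun n => a n * z ^ n) s) :
    HasSum (fun n => shiftCoeff a n * z ^ n) (z * s) := by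
  have hsucc : HasSum (fun n => shiftCoeff a (n + 1) * z ^ (n + 1)) (z * s) := by
    refine (h.mul_left z).congr_fun fun n => ?_
    show a n * z ^ (n + 1) = z * (a n * z ^ n)
    ring
  exact (hasSum_nat_add_iff' 1).1 (by simpa [shiftCoeff] using hsucc)

lemma IsCoeffsCofinite.shift {a : ℕ → ℂ} {φ : ℂ → ℂ} (h : IsCoeffsCofinite a φ) :
    IsCoeffsCofinite (shiftCoeff a) fun z => z * φ z :=
  h.mono fun _ hz hz1 => (hz hz1).shift

lemma IsCoeffs.one_sub_mul {a : ℕ → ℂ} {φ : ℂ → ℂ} (h : IsCoeffs a φ) (β : ℂ) :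
    IsCoeffs (fun n => a n - β * shiftCoeff a n) fun z => (1 - β * z) * φ z := fun z hz => by
  beta_reduce
  rw [show (1 - β * z) * φ z = φ z - β * (z * φ z) by ring]
  refine ((h z hz).sub ((h z hz).shift.mul_left β)).congr_fun fun n => ?_
  ring

lemma norm_mul_lt_one {α z : ℂ} (hα : ‖α‖ < 1) (hz : ‖z‖ < 1) : ‖α * z‖ < 1 := by
  rw [norm_mul]; exact mul_lt_one_of_nonneg_of_lt_one_left (norm_nonneg _) hα hz.le

lemma one_sub_mul_ne_zero {α z : ℂ} (hα : ‖α‖ < 1) (hz : ‖z‖ < 1) : 1 - α * z ≠ 0 :=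
  sub_ne_zero.2 fun h => by simpa [← h] using norm_mul_lt_one hα hz

noncomputable def geomCoeff (α : ℂ) (a : ℕ → ℂ) (n : ℕ) : ℂ :=
  ∑ j ∈ range (n + 1), α ^ (n - j) * a j

lemma geomCoeff_sub_mul_shiftCoeff (α : ℂ) (a : ℕ → ℂ) (n : ℕ) :
    geomCoeff α a n - α * shiftCoeff (geomCoeff α a) n = a n := by
  cases n with
  | zero => simp [geomCoeff, shiftCoeff]
  | succ n =>
    show geomCoeff α a (n + 1) - α * geomCoeff α a n = a (n + 1)
    rw [geomCoeff, geomCoeff, Finset.sum_range_succ, Finset.mul_sum, Nat.sub_self, pow_zero,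
      one_mul, add_sub_right_comm, add_eq_right, sub_eq_zero]
    refine Finset.sum_congr rfl fun j hj => ?_
    rw [show n + 1 - j = n - j + 1 by simp at hj; omega, pow_succ]
    ring

lemma HasSum.geom {a : ℕ → ℂ} {α z s : ℂ} (hαz : ‖α * z‖ < 1)
    (hsum : Summable fun n => ‖a n * z ^ n‖) (h : HasSum (fun n => a n * z ^ n) s) :
    HasSum (fun n => geomCoeff α a n * z ^ n) (s / (1 - α * z)) := by
  have hgeom : Summable fun n => ‖(α * z) ^ n‖ := by
    simpa [norm_pow] using summable_geometric_of_lt_one (norm_nonneg _) hαz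
  have hprod := tsum_mul_tsum_eq_tsum_sum_range_of_summable_norm hsum hgeom
  rw [h.tsum_eq, (hasSum_geometric_of_norm_lt_one hαz).tsum_eq, ← div_eq_mul_inv] at hprod
  rw [hprod]
  refine ((summable_norm_sum_mul_range_of_summable_norm hsum hgeom).of_norm.hasSum).congr_fun
    fun n => ?_
  rw [geomCoeff, Finset.sum_mul]
  refine Finset.sum_congr rfl fun j hj => ?_
  rw [show z ^ n = z ^ j * z ^ (n - j) by rw [← pow_add]; congr 1; simp at hj; omega]
  ring

lemma IsCoeffsCofinite.geom {a : ℕ → ℂ} {φ : ℂ → ℂ} (h : IsCoeffsCofinite a φ) {α : ℂ}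
    (hα : ‖α‖ < 1) : IsCoeffsCofinite (geomCoeff α a) fun z => φ z / (1 - α * z) :=
  h.mono fun _ hz hz1 => (hz hz1).geom (norm_mul_lt_one hα hz1) (h.summable_norm_mul_pow hz1)

lemma IsCoeffs.geom {a : ℕ → ℂ} {φ : ℂ → ℂ} (h : IsCoeffs a φ) {α : ℂ} (hα : ‖α‖ < 1) :
    IsCoeffs (geomCoeff α a) fun z => φ z / (1 - α * z) := fun z hz =>
  (h z hz).geom (norm_mul_lt_one hα hz) (h.isCoeffsCofinite.summable_norm_mul_pow hz)

noncomputable def blaschkeFactor (β z : ℂ) : ℂ := (z - β) / (1 - conj β * z)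

noncomputable def blaschkeCoeff (β : ℂ) (a : ℕ → ℂ) (n : ℕ) : ℂ :=
  shiftCoeff (geomCoeff (conj β) a) n - β * geomCoeff (conj β) a n

lemma IsCoeffsCofinite.blaschke {a : ℕ → ℂ} {φ : ℂ → ℂ} (h : IsCoeffsCofinite a φ) {β : ℂ}
    (hβ : ‖β‖ < 1) : IsCoeffsCofinite (blaschkeCoeff β a) fun z => blaschkeFactor β z * φ z := by
  have hA := h.geom (α := conj β) (by rwa [RCLike.norm_conj])
  refine (hA.shift.sub (hA.const_mul β)).congr (Eventually.of_forall fun z hz => ?_)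
  simp only [Pi.sub_apply, blaschkeFactor]
  ring

lemma HasSum.coeff_succ {e : ℕ → ℂ} {z s : ℂ} (h : HasSum (fun n => e n * z ^ n) s)
    (hz : z ≠ 0) : HasSum (fun n => e (n + 1) * z ^ n) ((s - e 0) / z) := by
  have hsucc := ((hasSum_nat_add_iff' 1).2 h).div_const z
  refine (by simpa using hsucc : HasSum _ ((s - e 0) / z)).congr_fun fun n => ?_
  rw [pow_succ, ← mul_assoc, mul_div_cancel_right₀ _ hz]

lemma norm_sub_coeff_zero_le {e : ℕ → ℂ} {D : ℝ} (hD : ∀ n, ‖e n‖ ≤ D * 2 ^ n) {z s : ℂ}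
    (hz : ‖z‖ ≤ 1 / 4) (hs : HasSum (fun n => e n * z ^ n) s) : ‖s - e 0‖ ≤ 4 * D * ‖z‖ := by
  have hD0 : 0 ≤ D := by simpa using (norm_nonneg _).trans (hD 0)
  have h2z : 2 * ‖z‖ < 1 := by linarith
  have htail : HasSum (fun n => e (n + 1) * z ^ (n + 1)) (s - e 0) := by
    simpa using (hasSum_nat_add_iff' 1).2 hs
  have hbound : ∀ n, ‖e (n + 1) * z ^ (n + 1)‖ ≤ 2 * D * ‖z‖ * (2 * ‖z‖) ^ n := fun n => by
    calc ‖e (n + 1) * z ^ (n + 1)‖ = ‖e (n + 1)‖ * ‖z‖ ^ (n + 1) := by rw [norm_mul, norm_pow]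
      _ ≤ D * 2 ^ (n + 1) * ‖z‖ ^ (n + 1) := by gcongr; exact hD _
      _ = 2 * D * ‖z‖ * (2 * ‖z‖) ^ n := by ring
  calc ‖s - e 0‖ ≤ 2 * D * ‖z‖ * (1 - 2 * ‖z‖)⁻¹ :=
        htail.norm_le_of_bounded
          ((hasSum_geometric_of_lt_one (by positivity) h2z).mul_left _) hbound
    _ ≤ 4 * D * ‖z‖ := by
        rw [← div_eq_mul_inv, div_le_iff₀ (by linarith)]
        nlinarith [mul_nonneg (mul_nonneg hD0 (norm_nonneg z)) (by linarith : 0 ≤ 1 - 4 * ‖z‖)]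

section CoeffLimit

variable {ι : Type*} {l : Filter ι} {q : ι → ℕ → ℂ} {u : ℕ → ℂ} {φ : ι → ℂ → ℂ} {ψ : ℂ → ℂ}
  {B C : ℝ}

lemma tendsto_coeff_zero_of_tendsto (hq : ∀ i n, ‖q i n‖ ≤ B * 2 ^ n)
    (hu : ∀ n, ‖u n‖ ≤ C * 2 ^ n)
    (h : ∀ᶠ z in cofinite, ‖z‖ < 1 → (∀ i, HasSum (fun n => q i n * z ^ n) (φ i z)) ∧
      HasSum (fun n => u n * z ^ n) (ψ z) ∧ Tendsto (fun i => φ i z) l (𝓝 (ψ z))) :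
    Tendsto (fun i => q i 0) l (𝓝 (u 0)) := by
  refine Metric.tendsto_nhds.2 fun ε hε => ?_
  set K := 4 * (|B| + |C|) + 1
  obtain ⟨t, ⟨ht0, htδ⟩, ht⟩ :=
    h.exists_ofReal_mem_Ioo (s := 0) (t := min (1 / 4) (ε / (2 * K))) (by positivity)
  have htnorm : ‖(t : ℂ)‖ = t := by rw [Complex.norm_real, Real.norm_of_nonneg ht0.le]
  have ht4 : t ≤ 1 / 4 := htδ.le.trans (min_le_left _ _)
  have hKt : 4 * (|B| + |C|) * t < ε / 2 := by
    have : t * (2 * K) < ε := (lt_div_iff₀ (by positivity)).1 (htδ.trans_le (min_le_right _ _))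
    nlinarith
  obtain ⟨hqt, hut, hlim⟩ := ht (by rw [htnorm]; linarith)
  have hu_t := norm_sub_coeff_zero_le (D := |C|)
    (fun n => (hu n).trans (by gcongr; exact le_abs_self C)) (by rwa [htnorm]) hut
  filter_upwards [Metric.tendsto_nhds.1 hlim (ε / 2) (by positivity)] with i hi
  have hq_t := norm_sub_coeff_zero_le (D := |B|)
    (fun n => (hq i n).trans (by gcongr; exact le_abs_self B)) (by rwa [htnorm]) (hqt i)
  rw [htnorm] at hu_t hq_t
  rw [dist_eq_norm] at hi ⊢
  calc ‖q i 0 - u 0‖ = ‖(ψ t - u 0) - (φ i t - q i 0) + (φ i t - ψ t)‖ := by ring_nf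
    _ ≤ ‖ψ t - u 0‖ + ‖φ i t - q i 0‖ + ‖φ i t - ψ t‖ :=
        (norm_add_le _ _).trans (by gcongr; exact norm_sub_le _ _)
    _ < ε := by linarith

lemma tendsto_coeff_of_tendsto (hq : ∀ i n, ‖q i n‖ ≤ B * 2 ^ n)
    (hu : ∀ n, ‖u n‖ ≤ C * 2 ^ n)
    (h : ∀ᶠ z in cofinite, ‖z‖ < 1 → (∀ i, HasSum (fun n => q i n * z ^ n) (φ i z)) ∧
      HasSum (fun n => u n * z ^ n) (ψ z) ∧ Tendsto (fun i => φ i z) l (𝓝 (ψ z))) (n : ℕ) :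
    Tendsto (fun i => q i n) l (𝓝 (u n)) := by
  induction n generalizing B C q u φ ψ with
  | zero => exact tendsto_coeff_zero_of_tendsto hq hu h
  | succ n ih =>
    have h0 := tendsto_coeff_zero_of_tendsto hq hu h
    refine ih (q := fun i n => q i (n + 1)) (u := fun n => u (n + 1))
      (φ := fun i z => (φ i z - q i 0) / z) (ψ := fun z => (ψ z - u 0) / z)
      (B := 2 * B) (C := 2 * C) (fun i n => ?_) (fun n => ?_) ?_
    · exact (hq i (n + 1)).trans_eq (by ring)
    · exact (hu (n + 1)).trans_eq (by ring)
    · filter_upwards [h, eventually_cofinite_ne 0] with z hz hz0 hz1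
      obtain ⟨hqz, huz, hlim⟩ := hz hz1
      exact ⟨fun i => (hqz i).coeff_succ hz0, huz.coeff_succ hz0, (hlim.sub h0).div_const z⟩

end CoeffLimit

lemma IsCoeffsCofinite.coeff_eq {a b : ℕ → ℂ} {φ : ℂ → ℂ} (ha : IsCoeffsCofinite a φ)
    (hb : IsCoeffsCofinite b φ) : a = b := by
  obtain ⟨B, hB⟩ := ha.exists_norm_le_mul_two_pow
  obtain ⟨C, hC⟩ := hb.exists_norm_le_mul_two_pow
  funext n
  refine tendsto_nhds_unique tendsto_const_nhds
    (tendsto_coeff_of_tendsto (l := (atTop : Filter ℕ)) (q := fun _ => a) (φ := fun _ => φ) (ψ := φ)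
      (fun _ => hB) hC ?_ n)
  filter_upwards [ha, hb] with z hza hzb hz
  exact ⟨fun _ => hza hz, hzb hz, tendsto_const_nhds⟩

lemma tendsto_tsum_geometric_mul_tail {α : ℂ} (hα : ‖α‖ < 1) {c : ℕ → ℂ}
    (hc : Tendsto c atTop (𝓝 0)) :
    Tendsto (fun n => ∑' i, α ^ i * c (n + (i + 1))) atTop (𝓝 0) := by
  obtain ⟨B, hB⟩ := hc.norm.bddAbove_range
  simpa using tendsto_tsum_of_dominated_convergence (g := fun _ => (0 : ℂ))
    ((summable_geometric_of_lt_one (norm_nonneg _) hα).mul_left B)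
    (fun i => by simpa using (hc.comp (tendsto_add_atTop_nat (i + 1))).const_mul (α ^ i))
    (Eventually.of_forall fun n i => by
      rw [norm_mul, norm_pow, mul_comm]; gcongr; exact hB ⟨_, rfl⟩)

lemma tendsto_zero_of_tendsto_shiftCoeff_sub {α : ℂ} (hα : ‖α‖ < 1) {A : ℕ → ℂ} {r C : ℝ}
    (hr : ‖α‖ < r) (hA : ∀ n, ‖A n‖ ≤ C / r ^ n)
    (hc : Tendsto (fun n => shiftCoeff A n - α * A n) atTop (𝓝 0)) :
    Tendsto A atTop (𝓝 0) := by
  set c := fun n => shiftCoeff A n - α * A n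
  have hr0 : 0 < r := (norm_nonneg α).trans_lt hr
  obtain ⟨B, hB⟩ := hc.norm.bddAbove_range
  suffices hrep : ∀ n, HasSum (fun i => α ^ i * c (n + (i + 1))) (A n) from
    (tendsto_tsum_geometric_mul_tail hα hc).congr fun n => (hrep n).tsum_eq
  intro n
  have hsumm : Summable fun i => α ^ i * c (n + (i + 1)) :=
    .of_norm_bounded ((summable_geometric_of_lt_one (norm_nonneg _) hα).mul_left B) fun i => by
      rw [norm_mul, norm_pow, mul_comm]; gcongr; exact hB ⟨_, rfl⟩
  have hpartial : ∀ j, ∑ i ∈ range j, α ^ i * c (n + (i + 1)) = A n - α ^ j * A (n + j) := by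
    intro j
    have htele := Finset.sum_range_sub' (fun i => α ^ i * A (n + i)) j
    simp only [add_zero, pow_zero, one_mul] at htele
    rw [← htele]
    refine Finset.sum_congr rfl fun i _ => ?_
    show α ^ i * (A (n + i) - α * A (n + i + 1)) = α ^ i * A (n + i) - α ^ (i + 1) * A (n + i + 1)
    ring
  have hrem : Tendsto (fun j => α ^ j * A (n + j)) atTop (𝓝 0) := by
    have hgeom := (tendsto_pow_atTop_nhds_zero_of_lt_one (by positivity)
      ((div_lt_one hr0).2 hr)).const_mul (C / r ^ n)
    rw [mul_zero] at hgeom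
    refine squeeze_zero_norm (fun j => ?_) hgeom
    calc ‖α ^ j * A (n + j)‖ = ‖α‖ ^ j * ‖A (n + j)‖ := by rw [norm_mul, norm_pow]
      _ ≤ ‖α‖ ^ j * (C / r ^ (n + j)) := by gcongr; exact hA _
      _ = C / r ^ n * (‖α‖ / r) ^ j := by rw [pow_add, div_pow]; field_simp
  rw [hsumm.hasSum_iff_tendsto_nat]
  simpa [hpartial] using tendsto_const_nhds.sub hrem

lemma ENNReal.tsum_ofReal_le_of_sum_range_le_add {x y e : ℕ → ℝ} (hx : ∀ i, 0 ≤ x i)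
    (hy : ∀ i, 0 ≤ y i) (he : Tendsto e atTop (𝓝 0))
    (h : ∀ L, ∑ i ∈ range L, x i ≤ ∑ i ∈ range L, y i + e L) :
    ∑' i, ENNReal.ofReal (x i) ≤ ∑' i, ENNReal.ofReal (y i) := by
  refine ENNReal.tsum_le_of_sum_range_le fun R => ?_
  have hlim : Tendsto (fun L => ∑' i, ENNReal.ofReal (y i) + ENNReal.ofReal (e L)) atTop
      (𝓝 (∑' i, ENNReal.ofReal (y i))) := by
    simpa using tendsto_const_nhds.add (ENNReal.tendsto_ofReal he)
  refine ge_of_tendsto hlim (eventually_atTop.2 ⟨R, fun L hRL => ?_⟩)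
  calc ∑ i ∈ range R, ENNReal.ofReal (x i) ≤ ∑ i ∈ range L, ENNReal.ofReal (x i) :=
        Finset.sum_le_sum_of_subset (range_subset_range.2 hRL)
    _ = ENNReal.ofReal (∑ i ∈ range L, x i) := (ENNReal.ofReal_sum_of_nonneg fun i _ => hx i).symm
    _ ≤ ENNReal.ofReal (∑ i ∈ range L, y i) + ENNReal.ofReal (e L) :=
        (ENNReal.ofReal_le_ofReal (h L)).trans ENNReal.ofReal_add_le
    _ ≤ _ := by
        rw [ENNReal.ofReal_sum_of_nonneg fun i _ => hy i]
        gcongr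
        exact ENNReal.sum_le_tsum _

lemma Filter.Tendsto.shiftCoeff {A : ℕ → ℂ} (hA : Tendsto A atTop (𝓝 0)) :
    Tendsto (shiftCoeff A) atTop (𝓝 0) :=
  (tendsto_add_atTop_iff_nat 1).1 hA

lemma norm_sq_sub_mul_add_eq (α A A' : ℂ) :
    ‖A' - α * A‖ ^ 2 + (1 - ‖α‖ ^ 2) * ‖A‖ ^ 2
      = ‖A - conj α * A'‖ ^ 2 + (1 - ‖α‖ ^ 2) * ‖A'‖ ^ 2 := by
  simp only [Complex.sq_norm, Complex.normSq_apply, Complex.sub_re, Complex.sub_im,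
    Complex.mul_re, Complex.mul_im, Complex.conj_re, Complex.conj_im]
  ring

lemma tailNormSq_sub_conj_mul_shiftCoeff_le {α : ℂ} (hα : ‖α‖ ≤ 1) {A : ℕ → ℂ}
    (hA : Tendsto A atTop (𝓝 0)) (k : ℕ) :
    tailNormSq k (fun n => A n - conj α * shiftCoeff A n)
      ≤ tailNormSq k (fun n => shiftCoeff A n - α * A n) := by
  set g : ℕ → ℝ := fun n => (1 - ‖α‖ ^ 2) * ‖shiftCoeff A n‖ ^ 2
  have hg0 : ∀ n, 0 ≤ g n := fun n => mul_nonneg (by nlinarith [norm_nonneg α]) (sq_nonneg _)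
  have hg : Tendsto (fun L => g (L + k)) atTop (𝓝 0) := by
    simpa using ((hA.shiftCoeff.comp (tendsto_add_atTop_nat k)).norm.pow 2).const_mul (1 - ‖α‖ ^ 2)
  refine ENNReal.tsum_ofReal_le_of_sum_range_le_add (fun _ => sq_nonneg _)
    (fun _ => sq_nonneg _) hg fun L => ?_
  have hstep : ∀ n, ‖A n - conj α * shiftCoeff A n‖ ^ 2
      = ‖shiftCoeff A n - α * A n‖ ^ 2 + (g (n + 1) - g n) := fun n => by
    have := norm_sq_sub_mul_add_eq α (A n) (shiftCoeff A n)
    show _ = _ + ((1 - ‖α‖ ^ 2) * ‖A n‖ ^ 2 - g n)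
    linarith
  have htele : ∑ i ∈ range L, (g (i + k + 1) - g (i + k)) = g (L + k) - g k := by
    simpa [add_right_comm] using Finset.sum_range_sub (fun i => g (i + k)) L
  simp only [hstep, Finset.sum_add_distrib, htele]
  linarith [hg0 k]

lemma IsCoeffsCofinite.tendsto_zero_and_tailNormSq_le_blaschke {a : ℕ → ℂ} {φ : ℂ → ℂ}
    (h : IsCoeffsCofinite a φ) {β : ℂ} (hβ : ‖β‖ < 1)
    (hc : Tendsto (blaschkeCoeff β a) atTop (𝓝 0)) :
    Tendsto a atTop (𝓝 0) ∧ ∀ k, tailNormSq k a ≤ tailNormSq k (blaschkeCoeff β a) := by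
  set A := geomCoeff (conj β) a
  obtain ⟨r, hβr, hr1⟩ := exists_between hβ
  obtain ⟨C, hC⟩ := (h.geom (α := conj β) (by rwa [RCLike.norm_conj])).exists_norm_le_div_pow
    ((norm_nonneg β).trans_lt hβr) hr1
  have hA : Tendsto A atTop (𝓝 0) := tendsto_zero_of_tendsto_shiftCoeff_sub hβ hβr hC hc
  have ha : ∀ n, A n - conj β * shiftCoeff A n = a n := geomCoeff_sub_mul_shiftCoeff _ a
  refine ⟨?_, fun k => ?_⟩
  · have := hA.sub (hA.shiftCoeff.const_mul (conj β))
    rw [mul_zero, sub_zero] at this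
    exact this.congr ha
  · calc tailNormSq k a = tailNormSq k fun n => A n - conj β * shiftCoeff A n :=
          congrArg _ (funext ha).symm
      _ ≤ tailNormSq k (blaschkeCoeff β a) := tailNormSq_sub_conj_mul_shiftCoeff_le hβ.le hA k

lemma IsCoeffsCofinite.tendsto_zero_and_tailNormSq_le_prod_blaschke {ι : Type*} (s : Finset ι)
    {β : ι → ℂ} (hβ : ∀ i ∈ s, ‖β i‖ < 1) {a c : ℕ → ℂ} {φ : ℂ → ℂ}
    (ha : IsCoeffsCofinite a φ)
    (hc : IsCoeffsCofinite c fun z => (∏ i ∈ s, blaschkeFactor (β i) z) * φ z)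
    (hc0 : Tendsto c atTop (𝓝 0)) :
    Tendsto a atTop (𝓝 0) ∧ ∀ k, tailNormSq k a ≤ tailNormSq k c := by
  classical
  induction s using Finset.induction_on generalizing a φ with
  | empty =>
    obtain rfl : a = c := ha.coeff_eq (by simpa using hc)
    exact ⟨hc0, fun _ => le_rfl⟩
  | insert i s hi ih =>
    have hβi := hβ i (mem_insert_self i s)
    obtain ⟨hb0, hbc⟩ := ih (fun j hj => hβ j (mem_insert_of_mem hj)) (ha.blaschke hβi)
      (hc.congr (Eventually.of_forall fun z _ => by rw [prod_insert hi, mul_assoc, mul_left_comm]))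
    obtain ⟨ha0, hab⟩ := ha.tendsto_zero_and_tailNormSq_le_blaschke hβi hb0
    exact ⟨ha0, fun k => (hab k).trans (hbc k)⟩

lemma tailNormSq_eq_top {a : ℕ → ℂ} (h : tailNormSq 0 a = ⊤) (k : ℕ) : tailNormSq k a = ⊤ := by
  have hsplit := ENNReal.summable.sum_add_tsum_nat_add' (f := fun n => ENNReal.ofReal (‖a n‖ ^ 2))
    (k := k)
  simp only [tailNormSq, add_zero] at h ⊢
  rw [h, ENNReal.add_eq_top] at hsplit
  exact hsplit.resolve_left (ENNReal.sum_ne_top.2 fun _ _ => ENNReal.ofReal_ne_top)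

lemma norm_le_sqrt_tailNormSq_zero {a : ℕ → ℂ} (h : tailNormSq 0 a ≠ ⊤) (n : ℕ) :
    ‖a n‖ ≤ √(tailNormSq 0 a).toReal := by
  rw [Real.le_sqrt (norm_nonneg _) ENNReal.toReal_nonneg,
    ← ENNReal.ofReal_le_iff_le_toReal h]
  simp only [tailNormSq, add_zero]
  exact ENNReal.le_tsum (f := fun n => ENNReal.ofReal (‖a n‖ ^ 2)) n

lemma tailNormSq_le_of_tendsto {ι : Type*} {l : Filter ι} [l.NeBot] {q : ι → ℕ → ℂ}
    {u v : ℕ → ℂ} {k : ℕ} (hlim : ∀ n, Tendsto (fun i => q i n) l (𝓝 (u n)))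
    (hq : ∀ i, tailNormSq k (q i) ≤ tailNormSq k v) : tailNormSq k u ≤ tailNormSq k v :=
  ENNReal.tsum_le_of_sum_range_le fun _ => le_of_tendsto
    (tendsto_finsetSum _ fun n _ => ENNReal.tendsto_ofReal ((hlim (n + k)).norm.pow 2))
    (Eventually.of_forall fun i => (ENNReal.sum_le_tsum _).trans (hq i))

lemma tailNormSq_le_of_isCoeffs_tendsto {ι : Type*} {l : Filter ι} [l.NeBot]
    {q : ι → ℕ → ℂ} {φ : ι → ℂ → ℂ} {u v : ℕ → ℂ} {ψ : ℂ → ℂ}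
    (hq : ∀ i, IsCoeffs (q i) (φ i)) (hu : IsCoeffs u ψ)
    (hφ : ∀ z, ‖z‖ < 1 → Tendsto (fun i => φ i z) l (𝓝 (ψ z)))
    (htail : ∀ i k, tailNormSq k (q i) ≤ tailNormSq k v) (k : ℕ) :
    tailNormSq k u ≤ tailNormSq k v := by
  by_cases hv : tailNormSq 0 v = ⊤
  · rw [tailNormSq_eq_top hv k]; exact le_top
  have hqB : ∀ i n, ‖q i n‖ ≤ √(tailNormSq 0 v).toReal * 2 ^ n := fun i n =>
    calc ‖q i n‖ ≤ √(tailNormSq 0 (q i)).toReal :=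
          norm_le_sqrt_tailNormSq_zero (ne_top_of_le_ne_top hv (htail i 0)) n
      _ ≤ √(tailNormSq 0 v).toReal := Real.sqrt_le_sqrt (ENNReal.toReal_mono hv (htail i 0))
      _ ≤ √(tailNormSq 0 v).toReal * 2 ^ n :=
          le_mul_of_one_le_right (Real.sqrt_nonneg _) (one_le_pow₀ one_le_two)
  obtain ⟨C, hC⟩ := hu.isCoeffsCofinite.exists_norm_le_mul_two_pow
  exact tailNormSq_le_of_tendsto (tendsto_coeff_of_tendsto hqB hC
    (Eventually.of_forall fun z hz => ⟨fun i => hq i z hz, hu z hz, hφ z hz⟩)) (fun i => htail i k)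

lemma eventually_blaschkeFactor_ne_zero (β : ℂ) : ∀ᶠ z in cofinite, blaschkeFactor β z ≠ 0 := by
  filter_upwards [eventually_cofinite_ne β, eventually_cofinite_ne (conj β)⁻¹] with z hβ hβ'
  exact div_ne_zero (sub_ne_zero.2 hβ)
    (sub_ne_zero.2 fun h => hβ' (eq_inv_of_mul_eq_one_right h.symm))

lemma eventually_eq_prod_Ioc_mul {α : ℕ → ℂ} {k N : ℕ} (hkN : k ≤ N) {F H H' : ℂ → ℂ}
    (hH : ∀ z : ℂ, ‖z‖ < 1 → F z = (∏ j ∈ Icc 1 k, blaschkeFactor (α j) z) * H z)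
    (hH' : ∀ z : ℂ, ‖z‖ < 1 → F z = (∏ j ∈ Icc 1 N, blaschkeFactor (α j) z) * H' z) :
    ∀ᶠ z in cofinite, ‖z‖ < 1 → H z = (∏ j ∈ Ioc k N, blaschkeFactor (α j) z) * H' z := by
  filter_upwards [(eventually_all_finset (Icc 1 k)).2
    fun j _ => eventually_blaschkeFactor_ne_zero (α j)] with z hz0 hz
  have hsplit : Icc 1 N = Icc 1 k ∪ Ioc k N := by ext; simp; omega
  have hdisj : Disjoint (Icc 1 k) (Ioc k N) :=
    disjoint_left.2 fun j h1 h2 => by simp at h1 h2; omega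
  have hHH' := (hH z hz).symm.trans (hH' z hz)
  rw [hsplit, prod_union hdisj, mul_assoc] at hHH'
  exact mul_left_cancel₀ (prod_ne_zero_iff.2 hz0) hHH'

lemma tendsto_zero_of_summable_norm_sq {f : ℕ → ℂ} (h : Summable fun n => ‖f n‖ ^ 2) :
    Tendsto f atTop (𝓝 0) := by
  rw [tendsto_zero_iff_norm_tendsto_zero]
  simpa using h.tendsto_atTop_zero.sqrt

lemma tendsto_zero_of_hasSum_div_sub {α : ℂ} (hα : ‖α‖ < 1) {f : ℕ → ℂ} {F : ℂ → ℂ}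
    (hf : IsCoeffs f F) (hf0 : Tendsto f atTop (𝓝 0)) {w : ℕ → ℂ}
    (hw : ∀ z : ℂ, ‖z‖ < 1 → z ≠ α → HasSum (fun n => w n * z ^ n) (F z / (z - α))) :
    Tendsto w atTop (𝓝 0) := by
  have hW : IsCoeffsCofinite w fun z => F z / (z - α) :=
    (eventually_cofinite_ne α).mono fun z hzα hz => hw z hz hzα
  have hrec : shiftCoeff w - (fun n => α * w n) = f := by
    refine ((hW.shift.sub (hW.const_mul α)).congr ?_).coeff_eq hf.isCoeffsCofinite
    filter_upwards [eventually_cofinite_ne α] with z hzα _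
    simp only [Pi.sub_apply]
    field_simp [sub_ne_zero.2 hzα]
  obtain ⟨r, hαr, hr1⟩ := exists_between hα
  obtain ⟨C, hC⟩ := hW.exists_norm_le_div_pow ((norm_nonneg α).trans_lt hαr) hr1
  exact tendsto_zero_of_tendsto_shiftCoeff_sub hα hαr hC
    (hf0.congr fun n => (congrFun hrec n).symm)

lemma tendsto_zero_and_tailNormSq_le_of_eq_prod_mul {α : ℕ → ℂ} {k : ℕ} (hk : 1 ≤ k)
    (hα : ∀ j ∈ Icc 1 k, ‖α j‖ < 1) {F H : ℂ → ℂ}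
    (hfac : ∀ z : ℂ, ‖z‖ < 1 → F z = (∏ j ∈ Icc 1 k, blaschkeFactor (α j) z) * H z)
    {v w : ℕ → ℂ} (hv : IsCoeffs v fun z => H z / (1 - conj (α k) * z))
    (hw : ∀ z : ℂ, ‖z‖ < 1 → z ≠ α k → HasSum (fun n => w n * z ^ n) (F z / (z - α k)))
    (hw0 : Tendsto w atTop (𝓝 0)) :
    Tendsto v atTop (𝓝 0) ∧ ∀ t, tailNormSq t v ≤ tailNormSq t w := by
  have hαk : ‖conj (α k)‖ < 1 := by rw [RCLike.norm_conj]; exact hα k (mem_Icc.2 ⟨hk, le_rfl⟩)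
  refine hv.isCoeffsCofinite.tendsto_zero_and_tailNormSq_le_prod_blaschke (Ico 1 k)
    (fun j hj => hα j (Ico_subset_Icc_self hj)) ?_ hw0
  filter_upwards [eventually_cofinite_ne (α k)] with z hzα hz
  have hFz := hfac z hz
  rw [← Ico_insert_right hk, prod_insert right_notMem_Ico, blaschkeFactor] at hFz
  convert hw z hz hzα using 1
  rw [hFz]
  field_simp [sub_ne_zero.2 hzα, one_sub_mul_ne_zero hαk hz]

lemma exists_isCoeffs_div_tailNormSq_le {α : ℕ → ℂ} {k N : ℕ} (hk : 1 ≤ k) (hkN : k ≤ N)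
    (hα : ∀ j ∈ Icc 1 N, ‖α j‖ < 1) {F H H' : ℂ → ℂ}
    (hH : ∀ z : ℂ, ‖z‖ < 1 → F z = (∏ j ∈ Icc 1 k, blaschkeFactor (α j) z) * H z)
    (hH' : ∀ z : ℂ, ‖z‖ < 1 → F z = (∏ j ∈ Icc 1 N, blaschkeFactor (α j) z) * H' z)
    {v v' : ℕ → ℂ} (hv : IsCoeffs v fun z => H z / (1 - conj (α k) * z))
    (hv0 : Tendsto v atTop (𝓝 0)) (hv' : IsCoeffs v' fun z => H' z / (1 - conj (α N) * z)) :
    ∃ q, IsCoeffs q (fun z => H' z / (1 - conj (α k) * z)) ∧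
      ∀ t, tailNormSq t q ≤ tailNormSq t v := by
  have hαk : ‖conj (α k)‖ < 1 := by rw [RCLike.norm_conj]; exact hα k (mem_Icc.2 ⟨hk, hkN⟩)
  have hαN : ‖conj (α N)‖ < 1 := by
    rw [RCLike.norm_conj]; exact hα N (mem_Icc.2 ⟨hk.trans hkN, le_rfl⟩)
  have hH'coeffs : IsCoeffs (fun n => v' n - conj (α N) * shiftCoeff v' n) H' := fun z hz => by
    convert hv'.one_sub_mul (conj (α N)) z hz using 1
    field_simp [one_sub_mul_ne_zero hαN hz]
  have hq := hH'coeffs.geom hαk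
  refine ⟨_, hq, (hq.isCoeffsCofinite.tendsto_zero_and_tailNormSq_le_prod_blaschke (Ioc k N)
    (fun j hj => hα j (by simp at hj ⊢; omega)) (hv.isCoeffsCofinite.congr ?_) hv0).2⟩
  filter_upwards [eventually_eq_prod_Ioc_mul hkN hH hH'] with z hz hz1
  rw [hz hz1, mul_div_assoc]

lemma exists_seq_tendsto_of_le_enat {m : ℕ∞} {k : ℕ} (hkm : (k : ℕ∞) ≤ m)
    {Fk : ℕ → ℂ → ℂ} {G : ℂ → ℂ}
    (hGfin : ∀ mf : ℕ, m = (mf : ℕ∞) → ∀ z : ℂ, ‖z‖ < 1 → Fk mf z = G z)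
    (hGinf : m = ⊤ → ∀ z : ℂ, ‖z‖ < 1 → Tendsto (fun k => Fk k z) atTop (𝓝 (G z))) :
    ∃ N : ℕ → ℕ, (∀ M, k ≤ N M ∧ (N M : ℕ∞) ≤ m) ∧
      ∀ z : ℂ, ‖z‖ < 1 → Tendsto (fun M => Fk (N M) z) atTop (𝓝 (G z)) := by
  cases m with
  | top => exact ⟨fun M => M + k, fun M => ⟨Nat.le_add_left k M, le_top⟩,
      fun z hz => (tendsto_add_atTop_iff_nat k).2 (hGinf rfl z hz)⟩
  | coe mf => exact ⟨fun _ => mf, fun _ => ⟨by exact_mod_cast hkm, le_rfl⟩,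
      fun z hz => by simp [hGfin mf rfl z hz]⟩

theorem stmt8_general (γ : ℕ → ℝ) (hmono : Monotone γ)
    (hconv : ∀ n, γ (n + 1) - γ n ≤ γ (n + 2) - γ (n + 1))
    (m : ℕ∞) (α : ℕ → ℂ)
    (hα : ∀ j : ℕ, 1 ≤ j → (j : ℕ∞) ≤ m → ‖α j‖ < 1)
    (F G : ℂ → ℂ) (Fk : ℕ → ℂ → ℂ)
    (hfac : ∀ k : ℕ, (k : ℕ∞) ≤ m → ∀ z : ℂ, ‖z‖ < 1 →
      F z = (∏ j ∈ Icc 1 k, (z - α j) / (1 - (starRingEnd ℂ) (α j) * z)) * Fk k z)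
    (hGfin : ∀ mf : ℕ, m = (mf : ℕ∞) → ∀ z : ℂ, ‖z‖ < 1 → Fk mf z = G z)
    (hGinf : m = ⊤ → ∀ z : ℂ, ‖z‖ < 1 →
      Tendsto (fun k => Fk k z) atTop (nhds (G z)))
    (f : ℕ → ℂ) (hf : IsCoeffs f F)
    (hH2 : Summable fun n => ‖f n‖ ^ 2)
    (u v w : ℕ → ℕ → ℂ)
    -- `u k` : coefficients of `G(z)/(1-ᾱ_k z)`
    (hu : ∀ k : ℕ, 1 ≤ k → (k : ℕ∞) ≤ m → ∀ z : ℂ, ‖z‖ < 1 →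
      HasSum (fun n => u k n * z ^ n) (G z / (1 - (starRingEnd ℂ) (α k) * z)))
    -- `v k` : coefficients of `H_{α_k}(z) = F_k(z)/(1-ᾱ_k z)`
    (hv : ∀ k : ℕ, 1 ≤ k → (k : ℕ∞) ≤ m → ∀ z : ℂ, ‖z‖ < 1 →
      HasSum (fun n => v k n * z ^ n) (Fk k z / (1 - (starRingEnd ℂ) (α k) * z)))
    -- `w k` : coefficients of `F(z)/(z-α_k)` (singularity removed)
    (hw : ∀ k : ℕ, 1 ≤ k → (k : ℕ∞) ≤ m → ∀ z : ℂ, ‖z‖ < 1 → z ≠ α k →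
      HasSum (fun n => w k n * z ^ n) (F z / (z - α k))) :
    ∀ k : ℕ, 1 ≤ k → (k : ℕ∞) ≤ m →
      ynorm2e γ (u k) ≤ ynorm2e γ (v k) ∧ ynorm2e γ (v k) ≤ ynorm2e γ (w k) := by
  intro k hk hkm
  have hαIcc : ∀ {N : ℕ}, (N : ℕ∞) ≤ m → ∀ j ∈ Icc 1 N, ‖α j‖ < 1 := fun hN j hj =>
    hα j (mem_Icc.1 hj).1 ((Nat.cast_le.2 (mem_Icc.1 hj).2).trans hN)
  have hw0 := tendsto_zero_of_hasSum_div_sub (hα k hk hkm) hf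
    (tendsto_zero_of_summable_norm_sq hH2) (hw k hk hkm)
  obtain ⟨hv0, hvw⟩ := tendsto_zero_and_tailNormSq_le_of_eq_prod_mul hk (hαIcc hkm) (hfac k hkm)
    (hv k hk hkm) (hw k hk hkm) hw0
  refine ⟨?_, ynorm2e_le_of_tailNormSq_le hmono hconv hvw⟩
  obtain ⟨N, hN, hNG⟩ := exists_seq_tendsto_of_le_enat hkm hGfin hGinf
  choose q hq htail using fun M => exists_isCoeffs_div_tailNormSq_le hk (hN M).1
    (hαIcc (hN M).2) (hfac k hkm) (hfac (N M) (hN M).2) (hv k hk hkm) hv0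
    (hv (N M) (hk.trans (hN M).1) (hN M).2)
  exact ynorm2e_le_of_tailNormSq_le hmono hconv
    (tailNormSq_le_of_isCoeffs_tendsto hq (hu k hk hkm) (fun z hz => (hNG z hz).div_const _) htail)

/-- Lemma (increasing differences): with `F ∈ X_γ` having zeros `α_1, α_2, …` (ordered by
increasing modulus, `m` finite or infinite), Blaschke decomposition `F = B·G`, partial
decompositions `F_k` (so `F = (∏_{j=1}^k (z-α_j)/(1-ᾱ_j z))·F_k` and `F_k → G`), and
`H_{α_k} = F_k/(1-ᾱ_k z)`: if `γ_{n+1}-γ_n` is monotone increasing then for each `k`,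
`‖G/(1-ᾱ_k·)‖_{Y_γ}² ≤ ‖H_{α_k}‖_{Y_γ}² ≤ ‖F/(·-α_k)‖_{Y_γ}²`. -/
theorem stmt8 (γ : ℕ → ℝ) (hmono : Monotone γ) (h0 : γ 0 = 0)
    (hconv : ∀ n, γ (n + 1) - γ n ≤ γ (n + 2) - γ (n + 1))
    (m : ℕ∞) (α : ℕ → ℂ)
    (hα : ∀ j : ℕ, 1 ≤ j → (j : ℕ∞) ≤ m → ‖α j‖ < 1)
    (hord : ∀ j : ℕ, 1 ≤ j → ((j : ℕ∞) + 1) ≤ m → ‖α j‖ ≤ ‖α (j + 1)‖)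
    (F G : ℂ → ℂ) (Fk : ℕ → ℂ → ℂ) (hFk0 : Fk 0 = F)
    (hfac : ∀ k : ℕ, (k : ℕ∞) ≤ m → ∀ z : ℂ, ‖z‖ < 1 →
      F z = (∏ j ∈ Icc 1 k, (z - α j) / (1 - (starRingEnd ℂ) (α j) * z)) * Fk k z)
    (hG0 : ∀ z : ℂ, ‖z‖ < 1 → G z ≠ 0)
    (hGfin : ∀ mf : ℕ, m = (mf : ℕ∞) → ∀ z : ℂ, ‖z‖ < 1 → Fk mf z = G z)
    (hGinf : m = ⊤ → ∀ z : ℂ, ‖z‖ < 1 →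
      Tendsto (fun k => Fk k z) atTop (nhds (G z)))
    (f : ℕ → ℂ) (hf : IsCoeffs f F)
    (hH2 : Summable fun n => ‖f n‖ ^ 2)
    (hX : Summable fun n => γ n * ‖f n‖ ^ 2)
    (u v w : ℕ → ℕ → ℂ)
    -- `u k` : coefficients of `G(z)/(1-ᾱ_k z)`
    (hu : ∀ k : ℕ, 1 ≤ k → (k : ℕ∞) ≤ m → ∀ z : ℂ, ‖z‖ < 1 →
      HasSum (fun n => u k n * z ^ n) (G z / (1 - (starRingEnd ℂ) (α k) * z)))
    -- `v k` : coefficients of `H_{α_k}(z) = F_k(z)/(1-ᾱ_k z)`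
    (hv : ∀ k : ℕ, 1 ≤ k → (k : ℕ∞) ≤ m → ∀ z : ℂ, ‖z‖ < 1 →
      HasSum (fun n => v k n * z ^ n) (Fk k z / (1 - (starRingEnd ℂ) (α k) * z)))
    -- `w k` : coefficients of `F(z)/(z-α_k)` (singularity removed)
    (hw : ∀ k : ℕ, 1 ≤ k → (k : ℕ∞) ≤ m → ∀ z : ℂ, ‖z‖ < 1 → z ≠ α k →
      HasSum (fun n => w k n * z ^ n) (F z / (z - α k))) :
    ∀ k : ℕ, 1 ≤ k → (k : ℕ∞) ≤ m →
      ynorm2e γ (u k) ≤ ynorm2e γ (v k) ∧ ynorm2e γ (v k) ≤ ynorm2e γ (w k) :=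
  stmt8_general γ hmono hconv m α hα F G Fk hfac hGfin hGinf f hf hH2 u v w hu hv hw
end

section
/- Let (γ_n) be monotone increasing with γ_0=0 and suppose Γ_n = γ_{n+1}−γ_n is bounded and monotone decreasing. If F ∈ H^2 has a root at α ∈ D with F(z) = (z−α)H_α(z), and φ_α(F)(z) = (1−ᾱz)H_α(z), then ‖φ_α(F)‖_{Y_γ}^2 ≥ ‖F‖_{Y_γ}^2. -/
open Finset

theorem Complex.norm_sub_conj_mul_sq_sub_norm_sub_mul_sq (α a b : ℂ) :
    ‖b - (starRingEnd ℂ) α * a‖ ^ 2 - ‖a - α * b‖ ^ 2 = (1 - ‖α‖ ^ 2) * (‖b‖ ^ 2 - ‖a‖ ^ 2) := by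
  simp only [Complex.sq_norm, Complex.normSq_apply, Complex.sub_re, Complex.sub_im,
    Complex.mul_re, Complex.mul_im, Complex.conj_re, Complex.conj_im]
  ring

section SummationByParts

variable {w x δ : ℕ → ℝ}

theorem mul_le_sum_range_succ_mul_of_sub_eq (hw : ∀ n, w (n + 1) ≤ w n) (hx : ∀ n, 0 ≤ x n)
    (hδ0 : δ 0 = x 0) (hδ : ∀ n, δ (n + 1) = x (n + 1) - x n) (N : ℕ) :
    w N * x N ≤ ∑ n ∈ range (N + 1), w n * δ n := by
  induction N with
  | zero => simp [hδ0]
  | succ N ih =>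
    rw [sum_range_succ, hδ]
    nlinarith [mul_le_mul_of_nonneg_right (hw N) (hx N)]

theorem sum_range_mul_nonneg_of_sub_eq (hw0 : ∀ n, 0 ≤ w n) (hw : ∀ n, w (n + 1) ≤ w n)
    (hx : ∀ n, 0 ≤ x n) (hδ0 : δ 0 = x 0) (hδ : ∀ n, δ (n + 1) = x (n + 1) - x n) (N : ℕ) :
    0 ≤ ∑ n ∈ range N, w n * δ n := by
  cases N with
  | zero => simp
  | succ N =>
    exact (mul_nonneg (hw0 N) (hx N)).trans (mul_le_sum_range_succ_mul_of_sub_eq hw hx hδ0 hδ N)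

end SummationByParts

theorem ENNReal.tsum_ofReal_le_tsum_ofReal_of_sum_range_le {f g : ℕ → ℝ} (hf : ∀ n, 0 ≤ f n)
    (hg : ∀ n, 0 ≤ g n) (h : ∀ N, ∑ n ∈ range N, f n ≤ ∑ n ∈ range N, g n) :
    ∑' n, ENNReal.ofReal (f n) ≤ ∑' n, ENNReal.ofReal (g n) := by
  rw [ENNReal.tsum_eq_iSup_nat, ENNReal.tsum_eq_iSup_nat]
  refine iSup_mono fun N => ?_
  rw [← ENNReal.ofReal_sum_of_nonneg fun n _ => hf n,
    ← ENNReal.ofReal_sum_of_nonneg fun n _ => hg n]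
  exact ENNReal.ofReal_le_ofReal (h N)

theorem stmt16_general (γ : ℕ → ℝ) (hmono : Monotone γ)
    (hconc : ∀ n, γ (n + 2) - γ (n + 1) ≤ γ (n + 1) - γ n)
    (α : ℂ) (hα : ‖α‖ < 1) (a c d : ℕ → ℂ)
    -- `c` : coefficients of `F(z) = (z-α)H_α(z)`, where `H_α` has coefficients `a`
    (hc0 : c 0 = -α * a 0) (hc : ∀ n, c (n + 1) = a n - α * a (n + 1))
    -- `d` : coefficients of `φ_α(F)(z) = (1-ᾱz)H_α(z)`
    (hd0 : d 0 = a 0) (hd : ∀ n, d (n + 1) = a (n + 1) - (starRingEnd ℂ) α * a n) :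
    ynorm2e γ c ≤ ynorm2e γ d := by
  have hΓ : ∀ n, 0 ≤ γ (n + 1) - γ n := fun n => sub_nonneg.2 (hmono n.le_succ)
  have hx : ∀ n, 0 ≤ (1 - ‖α‖ ^ 2) * ‖a n‖ ^ 2 := fun n =>
    mul_nonneg (sub_nonneg.2 (pow_le_one₀ (norm_nonneg α) hα.le)) (sq_nonneg _)
  have hδ0 : ‖d 0‖ ^ 2 - ‖c 0‖ ^ 2 = (1 - ‖α‖ ^ 2) * ‖a 0‖ ^ 2 := by
    rw [hd0, hc0, norm_mul, norm_neg]
    ring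
  have hδ : ∀ n, ‖d (n + 1)‖ ^ 2 - ‖c (n + 1)‖ ^ 2
      = (1 - ‖α‖ ^ 2) * ‖a (n + 1)‖ ^ 2 - (1 - ‖α‖ ^ 2) * ‖a n‖ ^ 2 := fun n => by
    rw [hd, hc, Complex.norm_sub_conj_mul_sq_sub_norm_sub_mul_sq, mul_sub]
  refine ENNReal.tsum_ofReal_le_tsum_ofReal_of_sum_range_le
    (fun n => mul_nonneg (hΓ n) (sq_nonneg _)) (fun n => mul_nonneg (hΓ n) (sq_nonneg _))
    fun N => ?_
  have hpartial := sum_range_mul_nonneg_of_sub_eq (δ := fun n => ‖d n‖ ^ 2 - ‖c n‖ ^ 2)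
    hΓ hconc hx hδ0 hδ N
  simpa only [mul_sub, sum_sub_distrib, sub_nonneg] using hpartial

/-- If the differences `Γ_n = γ_{n+1}-γ_n` are bounded and monotone decreasing, then
reflecting a root `α ∈ 𝔻` of `F ∈ H²` increases the `Y_γ` semi-norm:
`‖φ_α(F)‖_{Y_γ}² ≥ ‖F‖_{Y_γ}²`. -/
theorem stmt16 (γ : ℕ → ℝ) (hmono : Monotone γ) (h0 : γ 0 = 0)
    (hbdd : ∃ C : ℝ, ∀ n, γ (n + 1) - γ n ≤ C)
    (hconc : ∀ n, γ (n + 2) - γ (n + 1) ≤ γ (n + 1) - γ n)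
    (α : ℂ) (hα : ‖α‖ < 1) (a c d : ℕ → ℂ)
    -- `c` : coefficients of `F(z) = (z-α)H_α(z)`, where `H_α` has coefficients `a`
    (hc0 : c 0 = -α * a 0) (hc : ∀ n, c (n + 1) = a n - α * a (n + 1))
    -- `d` : coefficients of `φ_α(F)(z) = (1-ᾱz)H_α(z)`
    (hd0 : d 0 = a 0) (hd : ∀ n, d (n + 1) = a (n + 1) - (starRingEnd ℂ) α * a n)
    -- `F ∈ H²` (hence `H_α ∈ H²`)
    (hF2 : Summable fun n => ‖c n‖ ^ 2)
    (ha2 : Summable fun n => ‖a n‖ ^ 2) :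
    ynorm2e γ c ≤ ynorm2e γ d :=
  stmt16_general γ hmono hconc α hα a c d hc0 hc hd0 hd
end

section
/- Let (γ_n) be monotone increasing with γ_0=0 and Γ_n = γ_{n+1}−γ_n monotone increasing. If F ∈ Y_γ (i.e. ‖F‖_{Y_γ} < ∞) has a root at α ∈ D with F(z)=(z−α)H_α(z) and φ_α(F)(z) = (1−ᾱz)H_α(z), then ‖φ_α(F)‖_{Y_γ}^2 ≤ ‖F‖_{Y_γ}^2. -/
/-!
Write `F(z) = (z - α) H(z)` and `φ_α(F)(z) = (1 - ᾱ z) H(z)`, with coefficient sequences `c`, `d`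
and `a` respectively. Coefficientwise, `‖c (n+1)‖² - ‖d (n+1)‖² = (1 - |α|²) (‖a n‖² - ‖a (n+1)‖²)`,
so summation by parts against the weights `Γ n = γ (n+1) - γ n` gives
`∑_{n ≤ N} Γ n ‖d n‖² + (1 - |α|²) ∑_{n < N} (Γ (n+1) - Γ n) ‖a n‖²`
`  = ∑_{n ≤ N} Γ n ‖c n‖² + (1 - |α|²) Γ N ‖a N‖²`.
The middle sum is nonnegative because `Γ` is increasing, and the boundary term tends to `0`:
solving `a n = c (n+1) + α a (n+1)` forwards bounds `Γ n ‖a n‖²` by `(1 - |α|)⁻²` times the tail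
`∑_{m > n} Γ m ‖c m‖²`, again because `Γ` is increasing.
-/

open Finset Filter Topology

/-- `Y_γ` semi-norm squared. -/
noncomputable def ynorm2 (γ : ℕ → ℝ) (a : ℕ → ℂ) : ℝ :=
  ∑' n, (γ (n + 1) - γ n) * ‖a n‖ ^ 2

lemma norm_sub_mul_sq_sub_norm_sub_conj_mul_sq (α x y : ℂ) :
    ‖x - α * y‖ ^ 2 - ‖y - (starRingEnd ℂ) α * x‖ ^ 2 = (1 - ‖α‖ ^ 2) * (‖x‖ ^ 2 - ‖y‖ ^ 2) := by
  simp only [Complex.sq_norm, Complex.normSq_apply, Complex.sub_re, Complex.sub_im,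
    Complex.mul_re, Complex.mul_im, Complex.conj_re, Complex.conj_im]
  ring

lemma le_div_one_sub_of_le_add_mul_succ {x : ℕ → ℝ} {r B : ℝ} (hr0 : 0 ≤ r) (hr1 : r < 1)
    (hx : BddAbove (Set.range x)) (hrec : ∀ n, x n ≤ B + r * x (n + 1)) (n : ℕ) :
    x n ≤ B / (1 - r) := by
  have hsup : ⨆ k, x k ≤ B + r * ⨆ k, x k :=
    ciSup_le fun k => (hrec k).trans (by gcongr; exact le_ciSup hx (k + 1))
  rw [le_div_iff₀ (by linarith)]
  nlinarith [le_ciSup hx n]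

lemma summable_and_tsum_le_of_sum_range_succ_le {f g : ℕ → ℝ} {V : ℝ}
    (hf : ∀ n, 0 ≤ f n) (hg : Tendsto g atTop (𝓝 V)) (hfg : ∀ N, ∑ n ∈ range (N + 1), f n ≤ g N) :
    Summable f ∧ ∑' n, f n ≤ V := by
  obtain ⟨C, hC⟩ := hg.bddAbove_range
  have hsum : Summable f := summable_of_sum_range_le hf fun N =>
    (sum_le_sum_of_subset_of_nonneg (range_mono N.le_succ) fun n _ _ => hf n).trans
      ((hfg N).trans (hC ⟨N, rfl⟩))
  exact ⟨hsum, le_of_tendsto_of_tendsto' (hsum.hasSum.tendsto_sum_nat.comp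
    (tendsto_add_atTop_nat 1)) hg hfg⟩

section Reflection

variable {Γ : ℕ → ℝ} {α : ℂ} {a c d : ℕ → ℂ}

lemma mul_norm_sq_le_tsum_tail_div (hΓ0 : ∀ n, 0 ≤ Γ n) (hΓ : Monotone Γ) (hα : ‖α‖ < 1)
    (hc : ∀ n, c (n + 1) = a n - α * a (n + 1)) (ha : BddAbove (Set.range fun n => ‖a n‖))
    (hY : Summable fun n => Γ n * ‖c n‖ ^ 2) (n : ℕ) :
    Γ n * ‖a n‖ ^ 2 ≤ (∑' k, Γ (k + (n + 1)) * ‖c (k + (n + 1))‖ ^ 2) / (1 - ‖α‖) ^ 2 := by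
  set T := ∑' k, Γ (k + (n + 1)) * ‖c (k + (n + 1))‖ ^ 2
  have hT0 : 0 ≤ T := tsum_nonneg fun k => mul_nonneg (hΓ0 _) (sq_nonneg _)
  have hcT : ∀ k, Real.sqrt (Γ n) * ‖c (n + k + 1)‖ ≤ Real.sqrt T := by
    intro k
    rw [← Real.sqrt_sq (norm_nonneg (c _)), ← Real.sqrt_mul (hΓ0 n)]
    apply Real.sqrt_le_sqrt
    calc Γ n * ‖c (n + k + 1)‖ ^ 2 ≤ Γ (k + (n + 1)) * ‖c (k + (n + 1))‖ ^ 2 := by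
          rw [show n + k + 1 = k + (n + 1) by ring]
          gcongr
          exact hΓ (by omega)
      _ ≤ T := ((summable_nat_add_iff (n + 1)).2 hY).le_tsum k fun m _ =>
          mul_nonneg (hΓ0 _) (sq_nonneg _)
  set x : ℕ → ℝ := fun k => Real.sqrt (Γ n) * ‖a (n + k)‖
  have hxbdd : BddAbove (Set.range x) := by
    obtain ⟨C, hC⟩ := ha
    refine ⟨Real.sqrt (Γ n) * C, ?_⟩
    rintro _ ⟨k, rfl⟩
    exact mul_le_mul_of_nonneg_left (hC ⟨n + k, rfl⟩) (Real.sqrt_nonneg _)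
  have hrec : ∀ k, x k ≤ Real.sqrt T + ‖α‖ * x (k + 1) := by
    intro k
    have hsplit : a (n + k) = c (n + k + 1) + α * a (n + k + 1) := by rw [hc]; ring
    calc x k ≤ Real.sqrt (Γ n) * (‖c (n + k + 1)‖ + ‖α‖ * ‖a (n + k + 1)‖) := by
          simp only [x]
          gcongr
          rw [hsplit, ← norm_mul]
          exact norm_add_le _ _
      _ ≤ Real.sqrt T + ‖α‖ * x (k + 1) := by
          rw [mul_add, mul_left_comm]
          exact add_le_add (hcT k) le_rfl
  have hx0 := le_div_one_sub_of_le_add_mul_succ (norm_nonneg α) hα hxbdd hrec 0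
  have hx0' : 0 ≤ x 0 := mul_nonneg (Real.sqrt_nonneg _) (norm_nonneg _)
  calc Γ n * ‖a n‖ ^ 2 = x 0 ^ 2 := by simp [x, mul_pow, Real.sq_sqrt (hΓ0 n)]
    _ ≤ (Real.sqrt T / (1 - ‖α‖)) ^ 2 := pow_le_pow_left₀ hx0' hx0 2
    _ = T / (1 - ‖α‖) ^ 2 := by rw [div_pow, Real.sq_sqrt hT0]

lemma tendsto_mul_norm_sq_atTop_zero (hΓ0 : ∀ n, 0 ≤ Γ n) (hΓ : Monotone Γ) (hα : ‖α‖ < 1)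
    (hc : ∀ n, c (n + 1) = a n - α * a (n + 1)) (ha : BddAbove (Set.range fun n => ‖a n‖))
    (hY : Summable fun n => Γ n * ‖c n‖ ^ 2) :
    Tendsto (fun n => Γ n * ‖a n‖ ^ 2) atTop (𝓝 0) := by
  have htail : Tendsto (fun n => ∑' k, Γ (k + (n + 1)) * ‖c (k + (n + 1))‖ ^ 2) atTop (𝓝 0) :=
    (tendsto_sum_nat_add fun n => Γ n * ‖c n‖ ^ 2).comp (tendsto_add_atTop_nat 1)
  refine squeeze_zero (fun n => mul_nonneg (hΓ0 n) (sq_nonneg _))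
    (mul_norm_sq_le_tsum_tail_div hΓ0 hΓ hα hc ha hY) ?_
  simpa using htail.div_const ((1 - ‖α‖) ^ 2)

lemma sum_range_succ_mul_norm_sq_reflect (hc0 : c 0 = -α * a 0)
    (hc : ∀ n, c (n + 1) = a n - α * a (n + 1)) (hd0 : d 0 = a 0)
    (hd : ∀ n, d (n + 1) = a (n + 1) - (starRingEnd ℂ) α * a n) (N : ℕ) :
    ∑ n ∈ range (N + 1), Γ n * ‖d n‖ ^ 2
        + (1 - ‖α‖ ^ 2) * ∑ n ∈ range N, (Γ (n + 1) - Γ n) * ‖a n‖ ^ 2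
      = ∑ n ∈ range (N + 1), Γ n * ‖c n‖ ^ 2 + (1 - ‖α‖ ^ 2) * (Γ N * ‖a N‖ ^ 2) := by
  induction N with
  | zero =>
    simp only [zero_add, range_one, sum_singleton, range_zero, sum_empty, hd0, hc0, norm_mul,
      norm_neg]
    ring
  | succ N ih =>
    have hstep := norm_sub_mul_sq_sub_norm_sub_conj_mul_sq α (a N) (a (N + 1))
    rw [← hc N, ← hd N] at hstep
    rw [sum_range_succ (fun n => Γ n * ‖d n‖ ^ 2), sum_range_succ (fun n => Γ n * ‖c n‖ ^ 2),
      sum_range_succ (fun n => (Γ (n + 1) - Γ n) * ‖a n‖ ^ 2)]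
    linear_combination ih - Γ (N + 1) * hstep

end Reflection

theorem stmt17_general (γ : ℕ → ℝ) (hmono : Monotone γ)
    (hconv : ∀ n, γ (n + 1) - γ n ≤ γ (n + 2) - γ (n + 1))
    (α : ℂ) (hα : ‖α‖ < 1) (a c d : ℕ → ℂ)
    -- `c` : coefficients of `F(z) = (z-α)H_α(z)`, where `H_α` has coefficients `a`
    (hc0 : c 0 = -α * a 0) (hc : ∀ n, c (n + 1) = a n - α * a (n + 1))
    -- `d` : coefficients of `φ_α(F)(z) = (1-ᾱz)H_α(z)`
    (hd0 : d 0 = a 0) (hd : ∀ n, d (n + 1) = a (n + 1) - (starRingEnd ℂ) α * a n)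
    (ha2 : Summable fun n => ‖a n‖ ^ 2)
    -- `F ∈ Y_γ`
    (hY : Summable fun n => (γ (n + 1) - γ n) * ‖c n‖ ^ 2) :
    (Summable fun n => (γ (n + 1) - γ n) * ‖d n‖ ^ 2) ∧
      ynorm2 γ d ≤ ynorm2 γ c := by
  set Γ : ℕ → ℝ := fun n => γ (n + 1) - γ n
  have hΓ0 : ∀ n, 0 ≤ Γ n := fun n => sub_nonneg.2 (hmono n.le_succ)
  have hΓ : Monotone Γ := monotone_nat_of_le_succ hconv
  have hα2 : 0 ≤ 1 - ‖α‖ ^ 2 := by nlinarith [norm_nonneg α]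
  have ha : BddAbove (Set.range fun n => ‖a n‖) := by
    refine ⟨∑' n, ‖a n‖ ^ 2 + 1, ?_⟩
    rintro _ ⟨n, rfl⟩
    nlinarith [ha2.le_tsum n fun m _ => sq_nonneg ‖a m‖]
  have hboundary := (tendsto_mul_norm_sq_atTop_zero hΓ0 hΓ hα hc ha hY).const_mul (1 - ‖α‖ ^ 2)
  have hbound : Tendsto (fun N => ∑ n ∈ range (N + 1), Γ n * ‖c n‖ ^ 2
      + (1 - ‖α‖ ^ 2) * (Γ N * ‖a N‖ ^ 2)) atTop (𝓝 (ynorm2 γ c)) := by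
    rw [← add_zero (ynorm2 γ c), ← mul_zero (1 - ‖α‖ ^ 2)]
    exact (hY.hasSum.tendsto_sum_nat.comp (tendsto_add_atTop_nat 1)).add hboundary
  refine summable_and_tsum_le_of_sum_range_succ_le
    (fun n => mul_nonneg (hΓ0 n) (sq_nonneg _)) hbound fun N => ?_
  have hmid : 0 ≤ (1 - ‖α‖ ^ 2) * ∑ n ∈ range N, (Γ (n + 1) - Γ n) * ‖a n‖ ^ 2 :=
    mul_nonneg hα2 (sum_nonneg fun n _ => mul_nonneg (sub_nonneg.2 (hΓ n.le_succ)) (sq_nonneg _))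
  linarith [sum_range_succ_mul_norm_sq_reflect (Γ := Γ) hc0 hc hd0 hd N]

/-- If the differences `Γ_n = γ_{n+1}-γ_n` are monotone increasing, then reflecting a
root `α ∈ 𝔻` of `F ∈ Y_γ` decreases the `Y_γ` semi-norm:
`‖φ_α(F)‖_{Y_γ}² ≤ ‖F‖_{Y_γ}²`. -/
theorem stmt17 (γ : ℕ → ℝ) (hmono : Monotone γ) (h0 : γ 0 = 0)
    (hconv : ∀ n, γ (n + 1) - γ n ≤ γ (n + 2) - γ (n + 1))
    (α : ℂ) (hα : ‖α‖ < 1) (a c d : ℕ → ℂ)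
    -- `c` : coefficients of `F(z) = (z-α)H_α(z)`, where `H_α` has coefficients `a`
    (hc0 : c 0 = -α * a 0) (hc : ∀ n, c (n + 1) = a n - α * a (n + 1))
    -- `d` : coefficients of `φ_α(F)(z) = (1-ᾱz)H_α(z)`
    (hd0 : d 0 = a 0) (hd : ∀ n, d (n + 1) = a (n + 1) - (starRingEnd ℂ) α * a n)
    -- `F ∈ H²` (hence `H_α ∈ H²`)
    (hF2 : Summable fun n => ‖c n‖ ^ 2)
    (ha2 : Summable fun n => ‖a n‖ ^ 2)
    -- `F ∈ Y_γ`
    (hY : Summable fun n => (γ (n + 1) - γ n) * ‖c n‖ ^ 2) :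
    (Summable fun n => (γ (n + 1) - γ n) * ‖d n‖ ^ 2) ∧
      ynorm2 γ d ≤ ynorm2 γ c :=
  stmt17_general γ hmono hconv α hα a c d hc0 hc hd0 hd ha2 hY
end

section
/- If γ_n is the bounded sequence with γ_n = 0 for n < k and γ_n = 1 for n ≥ k (for a fixed k ≥ 1), then for any F ∈ H^2 with root α ∈ D, writing F(z)=(z−α)H(z) and φ_α(F)(z)=(1−ᾱz)H(z) with H(z)=Σ a_j z^j, we have ‖φ_α(F)‖_{X_γ}^2 = ‖F‖_{X_γ}^2 − (1−|α|^2)|a_{k−1}|^2. -/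
open Filter Topology ComplexConjugate

/-!
Write `F = (z - α) H` and `φ_α(F) = (1 - ᾱ z) H`. Coefficientwise, `|a_{n+1} - ᾱ a_n|²` differs
from `|a_n - α a_{n+1}|²` by `(1 - |α|²)(|a_{n+1}|² - |a_n|²)`, so the tail sums from index `k`
differ by `(1 - |α|²)` times a telescoping series, whose sum is `-|a_{k-1}|²` because `a ∈ ℓ²`.
-/

theorem Complex.norm_sub_conj_mul_sq (α x y : ℂ) :
    ‖y - conj α * x‖ ^ 2 = ‖x - α * y‖ ^ 2 + (1 - ‖α‖ ^ 2) * (‖y‖ ^ 2 - ‖x‖ ^ 2) := by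
  simp only [← Complex.normSq_eq_norm_sq, Complex.normSq_apply, Complex.sub_re, Complex.sub_im,
    Complex.mul_re, Complex.mul_im, Complex.conj_re, Complex.conj_im]
  ring

theorem hasSum_sub_of_tendsto {G : Type*} [AddCommGroup G] [TopologicalSpace G]
    [IsTopologicalAddGroup G] [T2Space G] {f : ℕ → G} {l : G}
    (hs : Summable fun n => f (n + 1) - f n) (hf : Tendsto f atTop (𝓝 l)) :
    HasSum (fun n => f (n + 1) - f n) (l - f 0) := by
  rw [hs.hasSum_iff_tendsto_nat]
  simpa only [Finset.sum_range_sub] using hf.sub_const (f 0)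

theorem tsum_norm_sq_reflect_tail (α : ℂ) (a c d : ℕ → ℂ)
    (hc : ∀ n, c (n + 1) = a n - α * a (n + 1))
    (hd : ∀ n, d (n + 1) = a (n + 1) - conj α * a n)
    (hF2 : Summable fun n => ‖c n‖ ^ 2) (ha2 : Summable fun n => ‖a n‖ ^ 2) (m : ℕ) :
    ∑' n, ‖d (n + m + 1)‖ ^ 2 = ∑' n, ‖c (n + m + 1)‖ ^ 2 - (1 - ‖α‖ ^ 2) * ‖a m‖ ^ 2 := by
  set f : ℕ → ℝ := fun n => ‖a (n + m)‖ ^ 2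
  have hpt : ∀ n, ‖d (n + m + 1)‖ ^ 2 =
      ‖c (n + m + 1)‖ ^ 2 + (1 - ‖α‖ ^ 2) * (f (n + 1) - f n) := fun n => by
    rw [hc, hd, Complex.norm_sub_conj_mul_sq]
    simp only [f, add_right_comm n 1 m]
  have hf : Summable f := (summable_nat_add_iff (f := fun n => ‖a n‖ ^ 2) m).mpr ha2
  have htele : HasSum (fun n => f (n + 1) - f n) (0 - f 0) :=
    hasSum_sub_of_tendsto (((summable_nat_add_iff 1).mpr hf).sub hf) hf.tendsto_atTop_zero
  have hc_tail : Summable fun n => ‖c (n + m + 1)‖ ^ 2 :=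
    (summable_nat_add_iff (f := fun n => ‖c n‖ ^ 2) (m + 1)).mpr hF2
  rw [tsum_congr hpt, (hc_tail.hasSum.add (htele.mul_left (1 - ‖α‖ ^ 2))).tsum_eq]
  simp only [f, zero_add]
  ring

theorem stmt19_general (k : ℕ) (hk : 1 ≤ k)
    (α : ℂ) (a c d : ℕ → ℂ)
    -- `c` : coefficients of `F(z) = (z-α)H(z)`, where `H` has coefficients `a`
    (hc : ∀ n, c (n + 1) = a n - α * a (n + 1))
    -- `d` : coefficients of `φ_α(F)(z) = (1-ᾱz)H(z)`
    (hd : ∀ n, d (n + 1) = a (n + 1) - (starRingEnd ℂ) α * a n)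
    -- `F ∈ H²` (hence `H ∈ H²`)
    (hF2 : Summable fun n => ‖c n‖ ^ 2)
    (ha2 : Summable fun n => ‖a n‖ ^ 2) :
    (∑' n : ℕ, ‖d (n + k)‖ ^ 2) =
      (∑' n : ℕ, ‖c (n + k)‖ ^ 2) - (1 - ‖α‖ ^ 2) * ‖a (k - 1)‖ ^ 2 := by
  obtain ⟨m, rfl⟩ : ∃ m, k = m + 1 := ⟨k - 1, by omega⟩
  simpa only [← add_assoc, Nat.add_sub_cancel] using
    tsum_norm_sq_reflect_tail α a c d hc hd hF2 ha2 m

/-- Specialization of the reflection identity to the weight `γ_n = 0` for `n < k`,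
`γ_n = 1` for `n ≥ k` (`k ≥ 1`): for `F ∈ H²` with root `α ∈ 𝔻`, `F(z)=(z-α)H(z)`,
`φ_α(F)(z)=(1-ᾱz)H(z)`, `H(z)=Σ a_j z^j`, one has
`‖φ_α(F)‖_{X_γ}² = ‖F‖_{X_γ}² − (1-|α|²)|a_{k-1}|²`, i.e. in terms of tail sums of the
coefficients `c` of `F` and `d` of `φ_α(F)`. -/
theorem stmt19 (k : ℕ) (hk : 1 ≤ k)
    (α : ℂ) (hα : ‖α‖ < 1) (a c d : ℕ → ℂ)
    -- `c` : coefficients of `F(z) = (z-α)H(z)`, where `H` has coefficients `a`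
    (hc0 : c 0 = -α * a 0) (hc : ∀ n, c (n + 1) = a n - α * a (n + 1))
    -- `d` : coefficients of `φ_α(F)(z) = (1-ᾱz)H(z)`
    (hd0 : d 0 = a 0) (hd : ∀ n, d (n + 1) = a (n + 1) - (starRingEnd ℂ) α * a n)
    -- `F ∈ H²` (hence `H ∈ H²`)
    (hF2 : Summable fun n => ‖c n‖ ^ 2)
    (ha2 : Summable fun n => ‖a n‖ ^ 2) :
    (∑' n : ℕ, ‖d (n + k)‖ ^ 2) =
      (∑' n : ℕ, ‖c (n + k)‖ ^ 2) - (1 - ‖α‖ ^ 2) * ‖a (k - 1)‖ ^ 2 :=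
  stmt19_general k hk α a c d hc hd hF2 ha2
end
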